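/- arXiv:1904.05848 — 2 statements merged into one kernel-verified Lean document; each statement's English description precedes it below -/
import Mathlib

section
/- Assume Φ satisfies ESC (constant ᾱ) and UCC (constant θ), and that diam(X) ≤ 1. Let n < m be natural numbers with m ≥ θ^{-1}[log 2 + n(ᾱ + θ)]. Then for every τ ∈ I^m and every ω ∈ I^n, either φ_τ^m(X) ∩ (½B_ω) = ∅ or φ_τ^m(X) ⊆ B_ω, where ½B_ω denotes the ball with the same center as B_ω and half its radius. -/
open Set Metric MeasureTheory Filter

noncomputable section

/-- Points of Euclidean space `ℝ^d`. -/
abbrev Pt (d : ℕ) : Type := EuclideanSpace ℝ (Fin d)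

/-- A nonautonomous conformal iterated function system on a compact convex set
`X ⊆ ℝ^d` with nonempty interior, contained in a bounded open connected set `V`.
`I n` is the (finite, nonempty) alphabet at level `n` (0-indexed version of `I^{(n+1)}`),
`φ n e` the corresponding injective conformal contraction, whose derivative at every
point of `V` is a similarity with (positive) scaling factor `D n e x`. -/
structure NCIFS (d : ℕ) (E : Type) [DecidableEq E] : Type where
  X : Set (Pt d)
  V : Set (Pt d)
  compactX : IsCompact X
  convexX : Convex ℝ X
  intX : (interior X).Nonempty
  XsubV : X ⊆ V
  openV : IsOpen V
  bddV : Bornology.IsBounded V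
  connV : IsConnected V
  I : ℕ → Finset E
  Ine : ∀ n, (I n).Nonempty
  φ : ℕ → E → Pt d → Pt d
  D : ℕ → E → Pt d → ℝ
  Dpos : ∀ n e, e ∈ I n → ∀ x ∈ V, 0 < D n e x
  mapsV : ∀ n e, e ∈ I n → Set.MapsTo (φ n e) V V
  mapsX : ∀ n e, e ∈ I n → Set.MapsTo (φ n e) X X
  injV : ∀ n e, e ∈ I n → Set.InjOn (φ n e) V
  conformal : ∀ n e, e ∈ I n → ∀ x ∈ V,
    ∃ A : Pt d →L[ℝ] Pt d, HasFDerivAt (φ n e) A x ∧ ∀ v, ‖A v‖ = D n e x * ‖v‖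
  contractX : ∀ n e, e ∈ I n → ∀ x ∈ X, D n e x < 1

/-- Extension of a finite word to an infinite sequence (values beyond the word
are an arbitrary fixed element; they are never used). -/
def wext {E : Type} [Nonempty E] {q : ℕ} (ω : Fin q → E) : ℕ → E :=
  fun j => if h : j < q then ω ⟨j, h⟩ else Classical.arbitrary E

/-- Concatenation `ωξ` of a finite word `ω` of length `n` with an infinite tail `ξ`. -/
def wcat {E : Type} {n : ℕ} (ω : Fin n → E) (ξ : ℕ → E) : ℕ → E :=
  fun j => if h : j < n then ω ⟨j, h⟩ else ξ (j - n)

namespace NCIFS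

variable {d : ℕ} {E : Type} [DecidableEq E]

/-- The finite words occupying levels `m, m+1, …, m+q-1`. -/
def words (S : NCIFS d E) (m q : ℕ) : Finset (Fin q → E) :=
  Fintype.piFinset fun k => S.I (m + (k : ℕ))

/-- The composition `φ_{ξ 0}^{(m)} ∘ φ_{ξ 1}^{(m+1)} ∘ ⋯ ∘ φ_{ξ (q-1)}^{(m+q-1)}`. -/
def comp (S : NCIFS d E) : ℕ → ℕ → (ℕ → E) → Pt d → Pt d
  | _, 0, _ => id
  | m, q + 1, ξ => S.φ m (ξ 0) ∘ S.comp (m + 1) q (fun j => ξ (j + 1))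

/-- The scaling factor `|Dφ_ξ^{(m,…,m+q-1)}(x)|` of the composition, via the chain rule. -/
def Dw (S : NCIFS d E) : ℕ → ℕ → (ℕ → E) → Pt d → ℝ
  | _, 0, _, _ => 1
  | m, q + 1, ξ, x =>
      S.D m (ξ 0) (S.comp (m + 1) q (fun j => ξ (j + 1)) x) *
        S.Dw (m + 1) q (fun j => ξ (j + 1)) x

/-- `‖Dφ_ξ‖ = sup_{x ∈ X} |Dφ_ξ(x)|`. -/
def normDw (S : NCIFS d E) (m q : ℕ) (ξ : ℕ → E) : ℝ :=
  sSup {r | ∃ x ∈ S.X, r = S.Dw m q ξ x}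

/-- `κ̲_{(n)}`: minimum over `j ∈ I^{(n)}` and `x ∈ X` of `|Dφ_j^{(n)}(x)|`. -/
def kminLv (S : NCIFS d E) (n : ℕ) : ℝ :=
  sInf {r | ∃ e ∈ S.I n, ∃ x ∈ S.X, r = S.D n e x}

/-- `κ̄_{(n)}`: maximum over `j ∈ I^{(n)}` and `x ∈ X` of `|Dφ_j^{(n)}(x)|`. -/
def kmaxLv (S : NCIFS d E) (n : ℕ) : ℝ :=
  sSup {r | ∃ e ∈ S.I n, ∃ x ∈ S.X, r = S.D n e x}

/-- `κ̲_n`: minimum over words `ω ∈ I^n` and `x ∈ X` of `|Dφ_ω^n(x)|`. -/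
def kmin [Nonempty E] (S : NCIFS d E) (n : ℕ) : ℝ :=
  sInf {r | ∃ ω ∈ S.words 0 n, ∃ x ∈ S.X, r = S.Dw 0 n (wext ω) x}

/-- `κ̄_n`: maximum over words `ω ∈ I^n` and `x ∈ X` of `|Dφ_ω^n(x)|`. -/
def kmax [Nonempty E] (S : NCIFS d E) (n : ℕ) : ℝ :=
  sSup {r | ∃ ω ∈ S.words 0 n, ∃ x ∈ S.X, r = S.Dw 0 n (wext ω) x}

/-- The partition function `Z_n(t) = Σ_{ω ∈ I^n} ‖Dφ_ω^n‖^t`. -/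
def Z [Nonempty E] (S : NCIFS d E) (n : ℕ) (t : ℝ) : ℝ :=
  ∑ ω ∈ S.words 0 n, (S.normDw 0 n (wext ω)) ^ t

/-- `‖Dφ_e^{(n)}‖`. -/
def normLv (S : NCIFS d E) (n : ℕ) (e : E) : ℝ :=
  sSup {r | ∃ x ∈ S.X, r = S.D n e x}

/-- `ρ_n = max_{a,b ∈ I^{(n)}} ‖Dφ_a^{(n)}‖ / ‖Dφ_b^{(n)}‖`. -/
def ρ (S : NCIFS d E) (n : ℕ) : ℝ :=
  sSup {r | ∃ a ∈ S.I n, ∃ b ∈ S.I n, r = S.normLv n a / S.normLv n b}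

/-- `min_{a ∈ I^{(n)}} ‖Dφ_a^{(n)}‖`. -/
def minNormLv (S : NCIFS d E) (n : ℕ) : ℝ :=
  sInf {r | ∃ e ∈ S.I n, r = S.normLv n e}

/-- The limit set `J = ⋂_{n ≥ 1} ⋃_{ω ∈ I^n} φ_ω^n(X)`. -/
def limitSet [Nonempty E] (S : NCIFS d E) : Set (Pt d) :=
  ⋂ n ∈ Set.Ici 1, ⋃ ω ∈ S.words 0 n, S.comp 0 n (wext ω) '' S.X

/-- `J_n = π_n(I^{(n+1,∞)})`: points lying in the nested intersection
`⋂_k φ_ξ^{(n,…,n+k-1)}(X)` for some admissible tail `ξ`. -/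
def Jlv (S : NCIFS d E) (n : ℕ) : Set (Pt d) :=
  {x | ∃ ξ : ℕ → E, (∀ j, ξ j ∈ S.I (n + j)) ∧ ∀ k, x ∈ S.comp n k ξ '' S.X}

/-- `X_ε = X \ B(ℝ^d \ X, ε)`. -/
def Xeps (S : NCIFS d E) (ε : ℝ) : Set (Pt d) :=
  S.X \ ⋃ y ∈ S.Xᶜ, Metric.ball y ε

/-- Open set condition. -/
def OSC (S : NCIFS d E) : Prop :=
  ∀ n, ∀ i ∈ S.I n, ∀ j ∈ S.I n, i ≠ j →
    S.φ n i '' interior S.X ∩ S.φ n j '' interior S.X = ∅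

/-- Uniformly contracting condition with constant `θ`. -/
def UCC (S : NCIFS d E) (θ : ℝ) : Prop :=
  0 < θ ∧ ∀ n, S.kmaxLv n ≤ Real.exp (-θ)

/-- Bounded distortion property with constant `K`. -/
def BDP [Nonempty E] (S : NCIFS d E) (K : ℝ) : Prop :=
  1 ≤ K ∧ ∀ n, ∀ ω ∈ S.words 0 n, ∀ x ∈ S.X, ∀ y ∈ S.X,
    S.Dw 0 n (wext ω) x ≤ K * S.Dw 0 n (wext ω) y

/-- Non-empty quasi middle condition with constant `ε`. -/
def NEQ (S : NCIFS d E) (ε : ℝ) : Prop :=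
  0 < ε ∧ ∀ n, (S.Jlv n ∩ S.Xeps ε).Nonempty

end NCIFS

/-- The (topological) support of a measure: points all of whose balls have positive measure. -/
def msupp {d : ℕ} (μ : Measure (Pt d)) : Set (Pt d) :=
  {x | ∀ r : ℝ, 0 < r → 0 < μ (Metric.ball x r)}

/-- `μ` is `h`-Ahlfors regular with constant `C`. -/
def Ahlfors {d : ℕ} (μ : Measure (Pt d)) (h C : ℝ) : Prop :=
  1 ≤ C ∧ ∀ x ∈ msupp μ, ∀ r : ℝ, 0 < r → r ≤ 1 →
    ENNReal.ofReal (C⁻¹ * r ^ h) ≤ μ (Metric.ball x r) ∧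
      μ (Metric.ball x r) ≤ ENNReal.ofReal (C * r ^ h)

/-- Shrinking-target data for a nonautonomous conformal IFS: the functions `β_n`
(positive on admissible tails), fixed admissible tails `ξ^{(n)}` and centers `x^{(n)} ∈ X`. -/
structure STData {d : ℕ} {E : Type} [DecidableEq E] (S : NCIFS d E) : Type where
  β : ℕ → (ℕ → E) → ℝ
  βpos : ∀ n ξ, (∀ j, ξ j ∈ S.I (n + j)) → 0 < β n ξ
  ξt : ℕ → ℕ → E
  ξtmem : ∀ n j, ξt n j ∈ S.I (n + j)
  xc : ℕ → Pt d
  xcX : ∀ n, xc n ∈ S.X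

namespace STData

variable {d : ℕ} {E : Type} [DecidableEq E] {S : NCIFS d E}

/-- The Birkhoff-type sum `S_nβ(ξ) = Σ_{k<n} β_k(σ^k ξ)`. -/
def Snβ (T : STData S) (n : ℕ) (ξ : ℕ → E) : ℝ :=
  ∑ k ∈ Finset.range n, T.β k (fun j => ξ (k + j))

/-- The radius `e^{-S_nβ(ωξ^{(n)})}` of the shrinking target `B_ω`. -/
def radius (T : STData S) {n : ℕ} (ω : Fin n → E) : ℝ :=
  Real.exp (-(T.Snβ n (wcat ω (T.ξt n))))

/-- The shrinking target `B_ω = B(φ_ω^n(x^{(n)}), e^{-S_nβ(ωξ^{(n)})})`. -/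
def tball [Nonempty E] (T : STData S) (n : ℕ) (ω : Fin n → E) : Set (Pt d) :=
  Metric.ball (S.comp 0 n (wext ω) (T.xc n)) (T.radius ω)

/-- The shrinking-target set `𝒟 = ⋂_{N≥1} ⋃_{n≥N} ⋃_{ω ∈ I^n} B_ω`. -/
def target [Nonempty E] (T : STData S) : Set (Pt d) :=
  ⋂ N ∈ Set.Ici 1, ⋃ n ∈ Set.Ici N, ⋃ ω ∈ S.words 0 n, T.tball n ω

/-- The upper pressure `P̄_β(t)`. -/
def upperP (T : STData S) (t : ℝ) : ℝ :=
  Filter.limsup (fun n : ℕ =>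
    (1 / (n : ℝ)) *
      Real.log (∑ ω ∈ S.words 0 n, Real.exp (-t * T.Snβ n (wcat ω (T.ξt n)))))
    Filter.atTop

/-- The lower pressure `P̲_β(t)`. -/
def lowerP (T : STData S) (t : ℝ) : ℝ :=
  Filter.liminf (fun n : ℕ =>
    (1 / (n : ℝ)) *
      Real.log (∑ ω ∈ S.words 0 n, Real.exp (-t * T.Snβ n (wcat ω (T.ξt n)))))
    Filter.atTop

/-- The Bowen parameter `b = inf {t ≥ 0 : P̄_β(t) < 0}`. -/
def bowen (T : STData S) : ℝ := sInf {t : ℝ | 0 ≤ t ∧ T.upperP t < 0}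

/-- `β` is tame: the upper pressure is strictly decreasing. -/
def tame (T : STData S) : Prop := StrictAntiOn T.upperP (Set.Ici 0)

/-- Exponentially shrinking condition with constants `al ≤ au`. -/
def ESC (T : STData S) (al au : ℝ) : Prop :=
  0 < al ∧ al ≤ au ∧ ∀ k, ∀ ξ : ℕ → E, (∀ j, ξ j ∈ S.I (k + j)) →
    al ≤ T.β k ξ + Real.log (S.kminLv k) ∧ T.β k ξ + Real.log (S.kmaxLv k) ≤ au

/-- Linear variation condition. -/
def LVC (T : STData S) : Prop :=
  Filter.Tendsto (fun n : ℕ =>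
    (1 / (n : ℝ)) *
      (sSup {r | ∃ ξ : ℕ → E, (∀ j, ξ j ∈ S.I j) ∧ r = T.Snβ n ξ} -
        sInf {r | ∃ ξ : ℕ → E, (∀ j, ξ j ∈ S.I j) ∧ r = T.Snβ n ξ}))
    Filter.atTop (nhds 0)

end STData

/-! By the mean value inequality on the convex set `X`, `φ_τ^m` is `∏_{j<m} κ̄_{(j)}`-Lipschitz
there, so `diam φ_τ^m(X) ≤ ∏_{j<m} κ̄_{(j)}`. The upper half of ESC gives
`e^{-β_k} ≥ e^{-ᾱ} κ̄_{(k)}`, hence the radius of `B_ω` is at least `e^{-nᾱ} ∏_{j<n} κ̄_{(j)}`,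
while UCC bounds the remaining `m - n` factors of the Lipschitz constant by `e^{-θ(m-n)}`.
The bound on `m` makes `diam φ_τ^m(X) ≤ ½ radius(B_ω)`, and a set that small meeting `½B_ω`
lies inside `B_ω`. -/

lemma Metric.inter_ball_eq_empty_or_subset_ball {α : Type*} [PseudoMetricSpace α]
    {A : Set α} {δ : ℝ} (hA : ∀ x ∈ A, ∀ y ∈ A, dist x y ≤ δ) (c : α) (s : ℝ) :
    A ∩ ball c s = ∅ ∨ A ⊆ ball c (s + δ) := by
  refine (eq_empty_or_nonempty _).imp id fun ⟨y, hyA, hy⟩ x hx => ?_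
  rw [mem_ball] at hy ⊢
  linarith [dist_triangle x y c, hA x hx y hyA]

namespace NCIFS

variable {d : ℕ} {E : Type} [DecidableEq E] (S : NCIFS d E)

lemma D_le_kmaxLv {k : ℕ} {e : E} (he : e ∈ S.I k) {x : Pt d} (hx : x ∈ S.X) :
    S.D k e x ≤ S.kmaxLv k :=
  le_csSup ⟨1, by rintro r ⟨e, he, x, hx, rfl⟩; exact (S.contractX k e he x hx).le⟩
    ⟨e, he, x, hx, rfl⟩

lemma kmaxLv_pos (k : ℕ) : 0 < S.kmaxLv k := by
  obtain ⟨e, he⟩ := S.Ine k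
  obtain ⟨x, hx⟩ := S.intX.mono interior_subset
  exact (S.Dpos k e he x (S.XsubV hx)).trans_le (S.D_le_kmaxLv he hx)

lemma dist_φ_le {k : ℕ} {e : E} (he : e ∈ S.I k) {x y : Pt d} (hx : x ∈ S.X) (hy : y ∈ S.X) :
    dist (S.φ k e x) (S.φ k e y) ≤ S.kmaxLv k * dist x y := by
  have hderiv : ∀ z ∈ S.X,
      HasFDerivWithinAt (S.φ k e) (fderiv ℝ (S.φ k e) z) S.X z := fun z hz => by
    obtain ⟨A, hA, -⟩ := S.conformal k e he z (S.XsubV hz)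
    exact hA.differentiableAt.hasFDerivAt.hasFDerivWithinAt
  have hbound : ∀ z ∈ S.X, ‖fderiv ℝ (S.φ k e) z‖ ≤ S.kmaxLv k := fun z hz => by
    obtain ⟨A, hA, hnorm⟩ := S.conformal k e he z (S.XsubV hz)
    rw [hA.fderiv]
    refine ContinuousLinearMap.opNorm_le_bound _ (S.kmaxLv_pos k).le fun v => ?_
    rw [hnorm]
    exact mul_le_mul_of_nonneg_right (S.D_le_kmaxLv he hz) (norm_nonneg v)
  simpa only [dist_eq_norm] using
    S.convexX.norm_image_sub_le_of_norm_hasFDerivWithin_le hderiv hbound hy hx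

lemma mapsTo_comp {k q : ℕ} {ξ : ℕ → E} (hξ : ∀ j < q, ξ j ∈ S.I (k + j)) :
    MapsTo (S.comp k q ξ) S.X S.X := by
  induction q generalizing k ξ with
  | zero => exact mapsTo_id _
  | succ q ih =>
    refine (S.mapsX k (ξ 0) (hξ 0 q.succ_pos)).comp (ih fun j hj => ?_)
    simpa only [Nat.add_right_comm k 1 j, add_assoc] using hξ (j + 1) (by omega)

lemma dist_comp_le {k q : ℕ} {ξ : ℕ → E} (hξ : ∀ j < q, ξ j ∈ S.I (k + j))
    {x y : Pt d} (hx : x ∈ S.X) (hy : y ∈ S.X) :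
    dist (S.comp k q ξ x) (S.comp k q ξ y) ≤
      (∏ j ∈ Finset.range q, S.kmaxLv (k + j)) * dist x y := by
  induction q generalizing k ξ with
  | zero => simp [comp]
  | succ q ih =>
    have htail : ∀ j < q, ξ (j + 1) ∈ S.I (k + 1 + j) := fun j hj => by
      simpa only [Nat.add_right_comm k 1 j, add_assoc] using hξ (j + 1) (by omega)
    have hmaps := S.mapsTo_comp htail
    calc dist (S.comp k (q + 1) ξ x) (S.comp k (q + 1) ξ y)
        ≤ S.kmaxLv k * dist (S.comp (k + 1) q (fun j => ξ (j + 1)) x)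
            (S.comp (k + 1) q (fun j => ξ (j + 1)) y) :=
          S.dist_φ_le (hξ 0 q.succ_pos) (hmaps hx) (hmaps hy)
      _ ≤ S.kmaxLv k * ((∏ j ∈ Finset.range q, S.kmaxLv (k + 1 + j)) * dist x y) :=
          mul_le_mul_of_nonneg_left (ih htail) (S.kmaxLv_pos k).le
      _ = (∏ j ∈ Finset.range (q + 1), S.kmaxLv (k + j)) * dist x y := by
          simp only [Finset.prod_range_succ', add_zero, Nat.add_right_comm k 1, add_assoc]
          ring

lemma prod_kmaxLv_Ico_le {θ : ℝ} (hUCC : S.UCC θ) (n m : ℕ) :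
    ∏ j ∈ Finset.Ico n m, S.kmaxLv j ≤ Real.exp (-θ) ^ (m - n) := by
  calc ∏ j ∈ Finset.Ico n m, S.kmaxLv j ≤ ∏ _j ∈ Finset.Ico n m, Real.exp (-θ) :=
        Finset.prod_le_prod (fun j _ => (S.kmaxLv_pos j).le) fun j _ => hUCC.2 j
    _ = Real.exp (-θ) ^ (m - n) := by rw [Finset.prod_const, Nat.card_Ico]

end NCIFS

lemma wext_mem {d : ℕ} {E : Type} [DecidableEq E] [Nonempty E] {S : NCIFS d E} {m : ℕ}
    {τ : Fin m → E} (hτ : τ ∈ S.words 0 m) {j : ℕ} (hj : j < m) : wext τ j ∈ S.I (0 + j) := by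
  simpa only [wext, dif_pos hj] using Fintype.mem_piFinset.mp hτ ⟨j, hj⟩

namespace STData

variable {d : ℕ} {E : Type} [DecidableEq E] {S : NCIFS d E} (T : STData S)

lemma wcat_mem {n : ℕ} {ω : Fin n → E} (hω : ω ∈ S.words 0 n) (i : ℕ) :
    wcat ω (T.ξt n) i ∈ S.I i := by
  unfold wcat
  split_ifs with hi
  · simpa only [zero_add] using Fintype.mem_piFinset.mp hω ⟨i, hi⟩
  · simpa only [Nat.add_sub_cancel' (not_lt.mp hi)] using T.ξtmem n (i - n)

lemma pow_mul_prod_kmaxLv_le_radius {al au : ℝ} (hESC : T.ESC al au) {n : ℕ}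
    {ω : Fin n → E} (hω : ω ∈ S.words 0 n) :
    Real.exp (-au) ^ n * ∏ k ∈ Finset.range n, S.kmaxLv k ≤ T.radius ω := by
  have hfactor : ∀ k ∈ Finset.range n, Real.exp (-au) * S.kmaxLv k ≤
      Real.exp (-T.β k fun j => wcat ω (T.ξt n) (k + j)) := fun k _ => by
    have hβ := (hESC.2.2 k _ fun j => T.wcat_mem hω (k + j)).2
    rw [← Real.exp_log (S.kmaxLv_pos k), ← Real.exp_add, Real.exp_le_exp]
    linarith
  calc Real.exp (-au) ^ n * ∏ k ∈ Finset.range n, S.kmaxLv k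
      = ∏ k ∈ Finset.range n, Real.exp (-au) * S.kmaxLv k := by
        rw [Finset.prod_mul_distrib, Finset.prod_const, Finset.card_range]
    _ ≤ ∏ k ∈ Finset.range n, Real.exp (-T.β k fun j => wcat ω (T.ξt n) (k + j)) :=
        Finset.prod_le_prod (fun k _ => by positivity [S.kmaxLv_pos k]) hfactor
    _ = T.radius ω := by
        rw [radius, Snβ, ← Real.exp_sum, Finset.sum_neg_distrib]

end STData

lemma two_mul_exp_neg_pow_le {θ a : ℝ} (hθ : 0 < θ) {n m : ℕ} (hnm : n ≤ m)
    (hm : θ⁻¹ * (Real.log 2 + n * (a + θ)) ≤ m) :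
    2 * Real.exp (-θ) ^ (m - n) ≤ Real.exp (-a) ^ n := by
  have hθm : Real.log 2 + n * (a + θ) ≤ θ * m := by
    rwa [inv_mul_le_iff₀ hθ] at hm
  rw [← Real.exp_log two_pos, ← Real.exp_nat_mul, ← Real.exp_nat_mul, ← Real.exp_add,
    Real.exp_le_exp, Nat.cast_sub hnm]
  linarith

theorem image_dichotomy_general {d : ℕ} {E : Type} [DecidableEq E] [Nonempty E]
    (S : NCIFS d E) (T : STData S)
    (al au θ : ℝ)
    (hESC : T.ESC al au) (hUCC : S.UCC θ)
    (hdiam : Metric.diam S.X ≤ 1)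
    (n m : ℕ) (hnm : n < m)
    (hm : θ⁻¹ * (Real.log 2 + (n : ℝ) * (au + θ)) ≤ (m : ℝ)) :
    ∀ τ ∈ S.words 0 m, ∀ ω ∈ S.words 0 n,
      S.comp 0 m (wext τ) '' S.X ∩
          Metric.ball (S.comp 0 n (wext ω) (T.xc n)) (T.radius ω / 2) = ∅ ∨
        S.comp 0 m (wext τ) '' S.X ⊆ T.tball n ω := by
  intro τ hτ ω hω
  set P : ℕ → ℝ := fun q => ∏ j ∈ Finset.range q, S.kmaxLv j
  have hP : ∀ q, 0 ≤ P q := fun q => Finset.prod_nonneg fun j _ => (S.kmaxLv_pos j).le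
  have hPm : P m ≤ T.radius ω / 2 :=
    calc P m = P n * ∏ j ∈ Finset.Ico n m, S.kmaxLv j := by
          simp only [P, Finset.range_eq_Ico]
          exact (Finset.prod_Ico_consecutive _ n.zero_le hnm.le).symm
      _ ≤ P n * (Real.exp (-au) ^ n / 2) := by
          refine mul_le_mul_of_nonneg_left ?_ (hP n)
          linarith [S.prod_kmaxLv_Ico_le hUCC n m, two_mul_exp_neg_pow_le hUCC.1 hnm.le hm]
      _ = Real.exp (-au) ^ n * P n / 2 := by ring
      _ ≤ T.radius ω / 2 := by gcongr; exact T.pow_mul_prod_kmaxLv_le_radius hESC hω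
  have hsmall : ∀ y ∈ S.comp 0 m (wext τ) '' S.X, ∀ z ∈ S.comp 0 m (wext τ) '' S.X,
      dist y z ≤ T.radius ω / 2 := by
    rintro _ ⟨x, hx, rfl⟩ _ ⟨x', hx', rfl⟩
    have hlip := S.dist_comp_le (fun _ => wext_mem hτ) hx hx'
    simp only [zero_add] at hlip
    calc _ ≤ P m * dist x x' := hlip
      _ ≤ P m * 1 := mul_le_mul_of_nonneg_left
          ((dist_le_diam_of_mem S.compactX.isBounded hx hx').trans hdiam) (hP m)
      _ ≤ T.radius ω / 2 := by linarith
  simpa only [add_halves, STData.tball] using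
    Metric.inter_ball_eq_empty_or_subset_ball hsmall
      (S.comp 0 n (wext ω) (T.xc n)) (T.radius ω / 2)

/-- Under ESC and UCC with `diam X ≤ 1`: if `n < m` and
`m ≥ θ⁻¹ (log 2 + n(ᾱ + θ))`, then for every `τ ∈ I^m` and `ω ∈ I^n`, either
`φ_τ^m(X)` misses the ball `½B_ω`, or `φ_τ^m(X) ⊆ B_ω`. -/
theorem image_dichotomy {d : ℕ} {E : Type} [DecidableEq E] [Nonempty E]
    (hd : 1 ≤ d) (S : NCIFS d E) (T : STData S)
    (al au θ : ℝ)
    (hESC : T.ESC al au) (hUCC : S.UCC θ)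
    (hdiam : Metric.diam S.X ≤ 1)
    (n m : ℕ) (hnm : n < m)
    (hm : θ⁻¹ * (Real.log 2 + (n : ℝ) * (au + θ)) ≤ (m : ℝ)) :
    ∀ τ ∈ S.words 0 m, ∀ ω ∈ S.words 0 n,
      S.comp 0 m (wext τ) '' S.X ∩
          Metric.ball (S.comp 0 n (wext ω) (T.xc n)) (T.radius ω / 2) = ∅ ∨
        S.comp 0 m (wext τ) '' S.X ⊆ T.tball n ω :=
  image_dichotomy_general S T al au θ hESC hUCC hdiam n m hnm hm
end
end

section
/- Assume Φ satisfies BDP with constant K. Fix h > 0 and n, q ≥ 1, and let μ be a Borel probability measure such that μ(φ_τ^{n+q}(X)) = ‖Dφ_τ^{n+q}‖^h / Z_{n+q}(h) for every τ ∈ I^{n+q}, μ is supported on ⋃_{τ∈I^{n+q}} φ_τ^{n+q}(X), and any two of the sets φ_τ^{n+q}(X) (τ ∈ I^{n+q}) intersect in a μ-null set. Then for every ω ∈ I^n, μ(φ_ω^n(X)) ≥ K^{-h} · Z_n(h)^{-1} · ‖Dφ_ω^n‖^h. -/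
open Set Metric MeasureTheory Filter

noncomputable section

/-! Split a word of length `n + q` as `ω'γ` with `ω' ∈ I^n`. By the chain rule and bounded
distortion, `‖Dφ_{ω'γ}‖ / ‖Dφ_{ω'}‖ ≤ sup_X |Dφ_γ| ≤ K ‖Dφ_{ωγ}‖ / ‖Dφ_ω‖` for every `ω ∈ I^n`.
Summing over `ω'` and `γ` gives `Z_{n+q}(h) ‖Dφ_ω‖^h ≤ K^h Z_n(h) Σ_γ ‖Dφ_{ωγ}‖^h`, and the last
sum is `Z_{n+q}(h)` times the total mass of the cylinders `φ_{ωγ}(X)`, which are almost disjoint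
and contained in `φ_ω(X)`. -/

section Wext

variable {E : Type} [Nonempty E]

lemma wext_append_of_lt {n q : ℕ} (ω : Fin n → E) (γ : Fin q → E) {j : ℕ} (hj : j < n) :
    wext (Fin.append ω γ) j = wext ω j := by
  have hcast : (⟨j, by omega⟩ : Fin (n + q)) = Fin.castAdd q ⟨j, hj⟩ := rfl
  simp only [wext, dif_pos hj, dif_pos (show j < n + q by omega), hcast, Fin.append_left]

lemma wext_append_add {n q : ℕ} (ω : Fin n → E) (γ : Fin q → E) {j : ℕ} (hj : j < q) :
    wext (Fin.append ω γ) (n + j) = wext γ j := by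
  have hnat : (⟨n + j, by omega⟩ : Fin (n + q)) = Fin.natAdd n ⟨j, hj⟩ := rfl
  simp only [wext, dif_pos hj, dif_pos (show n + j < n + q by omega), hnat, Fin.append_right]

end Wext

namespace NCIFS

variable {d : ℕ} {E : Type} [DecidableEq E] (S : NCIFS d E)

def Admissible (m a : ℕ) (ξ : ℕ → E) : Prop :=
  ∀ j < a, ξ j ∈ S.I (m + j)

variable {S}

lemma Admissible.head {m a : ℕ} {ξ : ℕ → E} (h : S.Admissible m (a + 1) ξ) : ξ 0 ∈ S.I m :=
  h 0 a.succ_pos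

lemma Admissible.tail {m a : ℕ} {ξ : ℕ → E} (h : S.Admissible m (a + 1) ξ) :
    S.Admissible (m + 1) a (fun j => ξ (j + 1)) := fun j hj => by
  rw [Nat.add_right_comm]
  exact h (j + 1) (by omega)

variable (S)

lemma comp_congr {m a : ℕ} {ξ ξ' : ℕ → E} (h : ∀ j < a, ξ j = ξ' j) :
    S.comp m a ξ = S.comp m a ξ' := by
  induction a generalizing m ξ ξ' with
  | zero => rfl
  | succ a ih =>
    show S.φ m (ξ 0) ∘ _ = S.φ m (ξ' 0) ∘ _
    rw [h 0 a.succ_pos, ih fun j hj => h (j + 1) (by omega)]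

lemma Dw_congr {m a : ℕ} {ξ ξ' : ℕ → E} (h : ∀ j < a, ξ j = ξ' j) :
    S.Dw m a ξ = S.Dw m a ξ' := by
  induction a generalizing m ξ ξ' with
  | zero => rfl
  | succ a ih =>
    funext x
    have htail : ∀ j < a, ξ (j + 1) = ξ' (j + 1) := fun j hj => h (j + 1) (by omega)
    show S.D m (ξ 0) _ * _ = S.D m (ξ' 0) _ * _
    rw [h 0 a.succ_pos, ih htail, S.comp_congr htail]

lemma comp_mapsTo {s : Set (Pt d)} (hs : ∀ n, ∀ e ∈ S.I n, MapsTo (S.φ n e) s s)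
    {m a : ℕ} {ξ : ℕ → E} (hξ : S.Admissible m a ξ) : MapsTo (S.comp m a ξ) s s := by
  induction a generalizing m ξ with
  | zero => exact mapsTo_id s
  | succ a ih => exact (hs m _ hξ.head).comp (ih hξ.tail)

lemma comp_continuousOn {m a : ℕ} {ξ : ℕ → E} (hξ : S.Admissible m a ξ) :
    ContinuousOn (S.comp m a ξ) S.V := by
  induction a generalizing m ξ with
  | zero => exact continuousOn_id
  | succ a ih =>
    have hφ : ContinuousOn (S.φ m (ξ 0)) S.V := fun x hx =>
      (S.conformal m _ hξ.head x hx).choose_spec.1.continuousAt.continuousWithinAt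
    exact hφ.comp (ih hξ.tail) (S.comp_mapsTo S.mapsV hξ.tail)

lemma isCompact_image_comp {m a : ℕ} {ξ : ℕ → E} (hξ : S.Admissible m a ξ) :
    IsCompact (S.comp m a ξ '' S.X) :=
  S.compactX.image_of_continuousOn ((S.comp_continuousOn hξ).mono S.XsubV)

lemma Dw_pos {m a : ℕ} {ξ : ℕ → E} (hξ : S.Admissible m a ξ) {x : Pt d} (hx : x ∈ S.X) :
    0 < S.Dw m a ξ x := by
  induction a generalizing m ξ with
  | zero => exact one_pos
  | succ a ih =>
    exact mul_pos (S.Dpos m _ hξ.head _ (S.XsubV (S.comp_mapsTo S.mapsX hξ.tail hx)))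
      (ih hξ.tail)

lemma normDw_le {m a : ℕ} {ξ : ℕ → E} {c : ℝ} (h : ∀ x ∈ S.X, S.Dw m a ξ x ≤ c) :
    S.normDw m a ξ ≤ c := by
  obtain ⟨x₀, hx₀⟩ := S.intX.mono interior_subset
  exact csSup_le ⟨_, x₀, hx₀, rfl⟩ (by rintro r ⟨x, hx, rfl⟩; exact h x hx)

lemma comp_add (m a b : ℕ) (ξ : ℕ → E) :
    S.comp m (a + b) ξ = S.comp m a ξ ∘ S.comp (m + a) b (fun j => ξ (a + j)) := by
  induction a generalizing m ξ with
  | zero => simp [comp]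
  | succ a ih =>
    rw [Nat.add_right_comm]
    show S.φ m (ξ 0) ∘ S.comp (m + 1) (a + b) (fun j => ξ (j + 1)) = _
    rw [ih (m + 1) (fun j => ξ (j + 1)), Nat.add_right_comm, ← Nat.add_assoc m a]
    simp only [Nat.add_right_comm a _ 1]
    rfl

lemma Dw_add (m a b : ℕ) (ξ : ℕ → E) (x : Pt d) :
    S.Dw m (a + b) ξ x =
      S.Dw m a ξ (S.comp (m + a) b (fun j => ξ (a + j)) x) *
        S.Dw (m + a) b (fun j => ξ (a + j)) x := by
  induction a generalizing m ξ with
  | zero => simp [Dw]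
  | succ a ih =>
    rw [Nat.add_right_comm]
    show S.D m (ξ 0) (S.comp (m + 1) (a + b) (fun j => ξ (j + 1)) x) *
      S.Dw (m + 1) (a + b) (fun j => ξ (j + 1)) x = _
    rw [ih, S.comp_add, Nat.add_right_comm, ← Nat.add_assoc m a]
    simp only [Nat.add_right_comm a _ 1]
    show _ = S.D m (ξ 0) _ * S.Dw (m + 1) a _ _ * _
    rw [mul_assoc]
    rfl

lemma words_nonempty (m a : ℕ) : (S.words m a).Nonempty :=
  Fintype.piFinset_nonempty.mpr fun _ => S.Ine _

lemma append_mem_words_iff {n q : ℕ} {ω : Fin n → E} {γ : Fin q → E} :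
    Fin.append ω γ ∈ S.words 0 (n + q) ↔ ω ∈ S.words 0 n ∧ γ ∈ S.words n q := by
  simp only [words, Fintype.mem_piFinset, Fin.forall_fin_add, Fin.append_left, Fin.append_right,
    Fin.val_castAdd, Fin.val_natAdd, zero_add]

lemma sum_words_add {M : Type*} [AddCommMonoid M] {n q : ℕ} (f : (Fin (n + q) → E) → M) :
    ∑ τ ∈ S.words 0 (n + q), f τ =
      ∑ ω ∈ S.words 0 n, ∑ γ ∈ S.words n q, f (Fin.append ω γ) := by
  rw [← Finset.sum_product']
  exact (Finset.sum_equiv (Fin.appendEquiv n q)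
    (fun _ => by rw [Finset.mem_product]; exact S.append_mem_words_iff.symm)
    fun _ _ => rfl).symm

lemma append_mem_words {n q : ℕ} {ω : Fin n → E} {γ : Fin q → E} (hω : ω ∈ S.words 0 n)
    (hγ : γ ∈ S.words n q) : Fin.append ω γ ∈ S.words 0 (n + q) :=
  S.append_mem_words_iff.mpr ⟨hω, hγ⟩

section Words

variable [Nonempty E]

def cylinder {n : ℕ} (ω : Fin n → E) : Set (Pt d) :=
  S.comp 0 n (wext ω) '' S.X

lemma admissible_wext {m a : ℕ} {ω : Fin a → E} (hω : ω ∈ S.words m a) :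
    S.Admissible m a (wext ω) := fun j hj => by
  simpa [wext, hj] using Fintype.mem_piFinset.mp hω ⟨j, hj⟩

lemma measurableSet_cylinder {n : ℕ} {ω : Fin n → E} (hω : ω ∈ S.words 0 n) :
    MeasurableSet (S.cylinder ω) :=
  (S.isCompact_image_comp (S.admissible_wext hω)).isClosed.measurableSet

lemma comp_wext_append {n q : ℕ} (ω : Fin n → E) (γ : Fin q → E) :
    S.comp 0 (n + q) (wext (Fin.append ω γ)) = S.comp 0 n (wext ω) ∘ S.comp n q (wext γ) := by
  rw [S.comp_add, zero_add, S.comp_congr fun j hj => wext_append_of_lt ω γ hj,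
    S.comp_congr fun j hj => wext_append_add ω γ hj]

lemma Dw_wext_append {n q : ℕ} (ω : Fin n → E) (γ : Fin q → E) (x : Pt d) :
    S.Dw 0 (n + q) (wext (Fin.append ω γ)) x =
      S.Dw 0 n (wext ω) (S.comp n q (wext γ) x) * S.Dw n q (wext γ) x := by
  rw [S.Dw_add, zero_add, S.Dw_congr fun j hj => wext_append_of_lt ω γ hj,
    S.Dw_congr fun j hj => wext_append_add ω γ hj, S.comp_congr fun j hj => wext_append_add ω γ hj]

lemma cylinder_append_subset {n q : ℕ} (ω : Fin n → E) {γ : Fin q → E}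
    (hγ : γ ∈ S.words n q) : S.cylinder (Fin.append ω γ) ⊆ S.cylinder ω := by
  rw [cylinder, S.comp_wext_append, image_comp]
  exact image_mono (S.comp_mapsTo S.mapsX (S.admissible_wext hγ)).image_subset

end Words

section BoundedDistortion

variable [Nonempty E] {S} {K : ℝ} (hK : S.BDP K)
include hK

lemma Dw_le_normDw {a : ℕ} {ω : Fin a → E} (hω : ω ∈ S.words 0 a) {x : Pt d} (hx : x ∈ S.X) :
    S.Dw 0 a (wext ω) x ≤ S.normDw 0 a (wext ω) :=
  le_csSup ⟨K * S.Dw 0 a (wext ω) x, by rintro r ⟨y, hy, rfl⟩; exact hK.2 a ω hω y hy x hx⟩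
    ⟨x, hx, rfl⟩

lemma normDw_le_mul_Dw {a : ℕ} {ω : Fin a → E} (hω : ω ∈ S.words 0 a) {x : Pt d}
    (hx : x ∈ S.X) : S.normDw 0 a (wext ω) ≤ K * S.Dw 0 a (wext ω) x :=
  S.normDw_le fun y hy => hK.2 a ω hω y hy x hx

lemma normDw_pos {a : ℕ} {ω : Fin a → E} (hω : ω ∈ S.words 0 a) : 0 < S.normDw 0 a (wext ω) := by
  obtain ⟨x, hx⟩ := S.intX.mono interior_subset
  exact (S.Dw_pos (S.admissible_wext hω) hx).trans_le (Dw_le_normDw hK hω hx)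

lemma Z_pos (n : ℕ) (t : ℝ) : 0 < S.Z n t :=
  Finset.sum_pos (fun _ hω => Real.rpow_pos_of_pos (normDw_pos hK hω) t) (S.words_nonempty 0 n)

lemma normDw_mul_Dw_le {n q : ℕ} {ω : Fin n → E} {γ : Fin q → E} (hω : ω ∈ S.words 0 n)
    (hγ : γ ∈ S.words n q) {x : Pt d} (hx : x ∈ S.X) :
    S.normDw 0 n (wext ω) * S.Dw n q (wext γ) x ≤
      K * S.normDw 0 (n + q) (wext (Fin.append ω γ)) := by
  have hy := S.comp_mapsTo S.mapsX (S.admissible_wext hγ) hx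
  calc S.normDw 0 n (wext ω) * S.Dw n q (wext γ) x
      ≤ K * S.Dw 0 n (wext ω) (S.comp n q (wext γ) x) * S.Dw n q (wext γ) x :=
        mul_le_mul_of_nonneg_right (normDw_le_mul_Dw hK hω hy)
          (S.Dw_pos (S.admissible_wext hγ) hx).le
    _ = K * S.Dw 0 (n + q) (wext (Fin.append ω γ)) x := by rw [S.Dw_wext_append, mul_assoc]
    _ ≤ K * S.normDw 0 (n + q) (wext (Fin.append ω γ)) :=
        mul_le_mul_of_nonneg_left
          (Dw_le_normDw hK (S.append_mem_words hω hγ) hx) (zero_le_one.trans hK.1)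

lemma normDw_append_mul_le {n q : ℕ} {ω ω' : Fin n → E} {γ : Fin q → E}
    (hω : ω ∈ S.words 0 n) (hω' : ω' ∈ S.words 0 n) (hγ : γ ∈ S.words n q) :
    S.normDw 0 (n + q) (wext (Fin.append ω' γ)) * S.normDw 0 n (wext ω) ≤
      K * S.normDw 0 n (wext ω') * S.normDw 0 (n + q) (wext (Fin.append ω γ)) := by
  have hW := normDw_pos hK hω
  rw [← le_div_iff₀ hW]
  refine S.normDw_le fun x hx => ?_
  have hy := S.comp_mapsTo S.mapsX (S.admissible_wext hγ) hx
  rw [le_div_iff₀ hW, S.Dw_wext_append]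
  calc S.Dw 0 n (wext ω') (S.comp n q (wext γ) x) * S.Dw n q (wext γ) x * S.normDw 0 n (wext ω)
      = S.Dw 0 n (wext ω') (S.comp n q (wext γ) x) *
          (S.normDw 0 n (wext ω) * S.Dw n q (wext γ) x) := by ring
    _ ≤ S.normDw 0 n (wext ω') * (K * S.normDw 0 (n + q) (wext (Fin.append ω γ))) :=
        mul_le_mul (Dw_le_normDw hK hω' hy) (normDw_mul_Dw_le hK hω hγ hx)
          (mul_pos hW (S.Dw_pos (S.admissible_wext hγ) hx)).le (normDw_pos hK hω').le
    _ = K * S.normDw 0 n (wext ω') * S.normDw 0 (n + q) (wext (Fin.append ω γ)) := by ring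

lemma Z_add_mul_rpow_le {n q : ℕ} {ω : Fin n → E} (hω : ω ∈ S.words 0 n) {t : ℝ} (ht : 0 ≤ t) :
    S.Z (n + q) t * S.normDw 0 n (wext ω) ^ t ≤
      K ^ t * S.Z n t * ∑ γ ∈ S.words n q, S.normDw 0 (n + q) (wext (Fin.append ω γ)) ^ t := by
  have hK0 : 0 ≤ K := zero_le_one.trans hK.1
  calc S.Z (n + q) t * S.normDw 0 n (wext ω) ^ t
      = ∑ ω' ∈ S.words 0 n, ∑ γ ∈ S.words n q,
          (S.normDw 0 (n + q) (wext (Fin.append ω' γ)) * S.normDw 0 n (wext ω)) ^ t := by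
        simp only [Z, S.sum_words_add, Finset.sum_mul]
        refine Finset.sum_congr rfl fun ω' hω' => Finset.sum_congr rfl fun γ hγ => ?_
        rw [Real.mul_rpow (normDw_pos hK (S.append_mem_words hω' hγ)).le
          (normDw_pos hK hω).le]
    _ ≤ ∑ ω' ∈ S.words 0 n, ∑ γ ∈ S.words n q,
          (K * S.normDw 0 n (wext ω') * S.normDw 0 (n + q) (wext (Fin.append ω γ))) ^ t :=
        Finset.sum_le_sum fun ω' hω' => Finset.sum_le_sum fun γ hγ =>
          Real.rpow_le_rpow (mul_nonneg (normDw_pos hK (S.append_mem_words hω' hγ)).le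
            (normDw_pos hK hω).le) (normDw_append_mul_le hK hω hω' hγ) ht
    _ = K ^ t * S.Z n t * ∑ γ ∈ S.words n q, S.normDw 0 (n + q) (wext (Fin.append ω γ)) ^ t := by
        rw [Z, Finset.mul_sum (s := S.words 0 n), Finset.sum_mul]
        refine Finset.sum_congr rfl fun ω' hω' => ?_
        rw [Finset.mul_sum]
        refine Finset.sum_congr rfl fun γ hγ => ?_
        rw [Real.mul_rpow (mul_nonneg hK0 (normDw_pos hK hω').le)
          (normDw_pos hK (S.append_mem_words hω hγ)).le, Real.mul_rpow hK0
          (normDw_pos hK hω').le]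

lemma rpow_div_Z_le_sum {n q : ℕ} {ω : Fin n → E} (hω : ω ∈ S.words 0 n) {t : ℝ} (ht : 0 ≤ t) :
    K ^ (-t) * (S.Z n t)⁻¹ * S.normDw 0 n (wext ω) ^ t ≤
      ∑ γ ∈ S.words n q, S.normDw 0 (n + q) (wext (Fin.append ω γ)) ^ t / S.Z (n + q) t := by
  have hKt : 0 < K ^ t := Real.rpow_pos_of_pos (zero_lt_one.trans_le hK.1) t
  have hZ := Z_pos hK n t
  rw [← Finset.sum_div, le_div_iff₀ (Z_pos hK _ t), Real.rpow_neg (zero_le_one.trans hK.1)]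
  calc (K ^ t)⁻¹ * (S.Z n t)⁻¹ * S.normDw 0 n (wext ω) ^ t * S.Z (n + q) t
      = (K ^ t * S.Z n t)⁻¹ * (S.Z (n + q) t * S.normDw 0 n (wext ω) ^ t) := by ring
    _ ≤ (K ^ t * S.Z n t)⁻¹ *
          (K ^ t * S.Z n t * ∑ γ ∈ S.words n q, S.normDw 0 (n + q) (wext (Fin.append ω γ)) ^ t) :=
        mul_le_mul_of_nonneg_left (Z_add_mul_rpow_le hK hω ht) (inv_pos.mpr (mul_pos hKt hZ)).le
    _ = ∑ γ ∈ S.words n q, S.normDw 0 (n + q) (wext (Fin.append ω γ)) ^ t := by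
        field_simp

end BoundedDistortion

lemma sum_measure_cylinder_append_le [Nonempty E] (μ : Measure (Pt d)) {n q : ℕ}
    {ω : Fin n → E} (hω : ω ∈ S.words 0 n)
    (hnull : ∀ τ ∈ S.words 0 (n + q), ∀ τ' ∈ S.words 0 (n + q), τ ≠ τ' →
      μ (S.cylinder τ ∩ S.cylinder τ') = 0) :
    ∑ γ ∈ S.words n q, μ (S.cylinder (Fin.append ω γ)) ≤ μ (S.cylinder ω) := by
  rw [← measure_biUnion_finset₀]
  · exact measure_mono (iUnion₂_subset fun γ hγ => S.cylinder_append_subset ω hγ)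
  · intro γ hγ γ' hγ' hne
    refine hnull _ (S.append_mem_words hω hγ) _ (S.append_mem_words hω hγ') fun h => hne ?_
    exact congrArg Prod.snd ((Fin.appendEquiv n q).injective (a₁ := (ω, γ)) (a₂ := (ω, γ')) h)
  · intro γ hγ
    exact (S.measurableSet_cylinder (S.append_mem_words hω hγ)).nullMeasurableSet

end NCIFS

theorem cylinder_mass_lower_bound_general {d : ℕ} {E : Type} [DecidableEq E] [Nonempty E]
    (S : NCIFS d E)
    (K h : ℝ) (hBDP : S.BDP K) (hh : 0 < h)
    (n q : ℕ)
    (μ : Measure (Pt d))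
    (hval : ∀ τ ∈ S.words 0 (n + q),
      μ (S.comp 0 (n + q) (wext τ) '' S.X) =
        ENNReal.ofReal ((S.normDw 0 (n + q) (wext τ)) ^ h / S.Z (n + q) h))
    (hnull : ∀ τ ∈ S.words 0 (n + q), ∀ τ' ∈ S.words 0 (n + q), τ ≠ τ' →
      μ (S.comp 0 (n + q) (wext τ) '' S.X ∩ S.comp 0 (n + q) (wext τ') '' S.X) = 0) :
    ∀ ω ∈ S.words 0 n,
      ENNReal.ofReal (K ^ (-h) * (S.Z n h)⁻¹ * (S.normDw 0 n (wext ω)) ^ h) ≤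
        μ (S.comp 0 n (wext ω) '' S.X) := by
  intro ω hω
  calc ENNReal.ofReal (K ^ (-h) * (S.Z n h)⁻¹ * S.normDw 0 n (wext ω) ^ h)
      ≤ ENNReal.ofReal (∑ γ ∈ S.words n q,
          S.normDw 0 (n + q) (wext (Fin.append ω γ)) ^ h / S.Z (n + q) h) :=
        ENNReal.ofReal_le_ofReal (S.rpow_div_Z_le_sum hBDP hω hh.le)
    _ = ∑ γ ∈ S.words n q, μ (S.cylinder (Fin.append ω γ)) := by
        rw [ENNReal.ofReal_sum_of_nonneg fun γ hγ => div_nonneg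
          (Real.rpow_nonneg (S.normDw_pos hBDP (S.append_mem_words hω hγ)).le h)
          (S.Z_pos hBDP _ h).le]
        exact Finset.sum_congr rfl fun γ hγ => (hval _ (S.append_mem_words hω hγ)).symm
    _ ≤ μ (S.cylinder ω) := S.sum_measure_cylinder_append_le μ hω hnull

/-- If `μ` gives each cylinder `φ_τ^{n+q}(X)` mass
`‖Dφ_τ^{n+q}‖^h / Z_{n+q}(h)`, is supported on the union of these cylinders, and distinct
cylinders intersect in null sets, then under BDP with constant `K`, for every `ω ∈ I^n`,
`μ(φ_ω^n(X)) ≥ K^{-h} Z_n(h)⁻¹ ‖Dφ_ω^n‖^h`. -/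
theorem cylinder_mass_lower_bound {d : ℕ} {E : Type} [DecidableEq E] [Nonempty E]
    (hd : 1 ≤ d) (S : NCIFS d E)
    (K h : ℝ) (hBDP : S.BDP K) (hh : 0 < h)
    (n q : ℕ) (hn : 1 ≤ n) (hq : 1 ≤ q)
    (μ : Measure (Pt d)) [IsProbabilityMeasure μ]
    (hval : ∀ τ ∈ S.words 0 (n + q),
      μ (S.comp 0 (n + q) (wext τ) '' S.X) =
        ENNReal.ofReal ((S.normDw 0 (n + q) (wext τ)) ^ h / S.Z (n + q) h))
    (hsupp : μ (⋃ τ ∈ S.words 0 (n + q), S.comp 0 (n + q) (wext τ) '' S.X)ᶜ = 0)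
    (hnull : ∀ τ ∈ S.words 0 (n + q), ∀ τ' ∈ S.words 0 (n + q), τ ≠ τ' →
      μ (S.comp 0 (n + q) (wext τ) '' S.X ∩ S.comp 0 (n + q) (wext τ') '' S.X) = 0) :
    ∀ ω ∈ S.words 0 n,
      ENNReal.ofReal (K ^ (-h) * (S.Z n h)⁻¹ * (S.normDw 0 n (wext ω)) ^ h) ≤
        μ (S.comp 0 n (wext ω) '' S.X) :=
  cylinder_mass_lower_bound_general S K h hBDP hh n q μ hval hnull
end
end
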